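/- arXiv:2501.11032 — 8 statements merged into one kernel-verified Lean document; each statement's English description precedes it below -/
import Mathlib

section
/- Let (X, ω) be a symplectic vector space over 𝕂 ∈ {ℝ, ℂ}. Let V be an ω-closed linear subspace of X and let V₁ ⊇ V be a linear subspace with dim(V₁/V) < ∞. Then dim(V₁/V) = dim(V^ω/V₁^ω) and V₁ is ω-closed. In particular, every finite-dimensional linear subspace of X is ω-closed. -/
/-- The ω-annihilator of a linear subspace:
`V^ω = {x ∈ X : ω(x, y) = 0 for all y ∈ V}`. -/
def omegaAnn {𝕂 : Type*} [Field 𝕂] {X : Type*} [AddCommGroup X] [Module 𝕂 X]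
    (ω : X →ₗ[𝕂] X →ₗ[𝕂] 𝕂) (V : Submodule 𝕂 X) : Submodule 𝕂 X where
  carrier := {x | ∀ y ∈ V, ω x y = 0}
  zero_mem' := by intro y hy; simp
  add_mem' := by
    intro a b ha hb y hy
    simp only [map_add, LinearMap.add_apply, ha y hy, hb y hy, add_zero]
  smul_mem' := by
    intro c a ha y hy
    simp only [map_smul, LinearMap.smul_apply, ha y hy, smul_zero]

section Aux

variable {𝕂 : Type*} [Field 𝕂] {X : Type*} [AddCommGroup X] [Module 𝕂 X]

theorem mem_omegaAnn {ω : X →ₗ[𝕂] X →ₗ[𝕂] 𝕂} {V : Submodule 𝕂 X} {x : X} :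
    x ∈ omegaAnn ω V ↔ ∀ y ∈ V, ω x y = 0 := Iff.rfl

theorem main_aux (ω : X →ₗ[𝕂] X →ₗ[𝕂] 𝕂)
    (hskew : ∀ x y, ω x y = - ω y x)
    (V V₁ : Submodule 𝕂 X)
    (hVclosed : omegaAnn ω (omegaAnn ω V) = V)
    (hle : V ≤ V₁)
    (hfin : FiniteDimensional 𝕂 (V₁ ⧸ V.comap V₁.subtype)) :
    Module.rank 𝕂 (V₁ ⧸ V.comap V₁.subtype)
        = Module.rank 𝕂 ((omegaAnn ω V) ⧸ (omegaAnn ω V₁).comap (omegaAnn ω V).subtype)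
      ∧ omegaAnn ω (omegaAnn ω V₁) = V₁ := by
  set A : Submodule 𝕂 X := omegaAnn ω V with hA
  set A₁ : Submodule 𝕂 X := omegaAnn ω V₁ with hA₁
  set Vc : Submodule 𝕂 V₁ := V.comap V₁.subtype with hVc
  set Ac : Submodule 𝕂 A := A₁.comap A.subtype with hAc
  -- the pairing x ↦ (y ↦ ω y x) on V₁ × A
  set e1 : V₁ →ₗ[𝕂] A →ₗ[𝕂] 𝕂 := ((ω.comp A.subtype).compl₂ V₁.subtype).flip with he1
  have e1_apply : ∀ (x : V₁) (y : A), e1 x y = ω (y : X) (x : X) := fun _ _ => rfl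
  have h1 : ∀ x : V₁, Ac ≤ LinearMap.ker (e1 x) := by
    intro x y hy
    have hy' : (y : X) ∈ A₁ := hy
    simpa [e1_apply] using hy' (x : X) x.2
  -- lift the pairing in the second variable
  set e2 : V₁ →ₗ[𝕂] ((A ⧸ Ac) →ₗ[𝕂] 𝕂) :=
    { toFun := fun x => Ac.liftQ (e1 x) (h1 x)
      map_add' := by
        intro x₁ x₂
        apply LinearMap.ext
        intro q
        obtain ⟨y, rfl⟩ := Ac.mkQ_surjective q
        simp [Submodule.liftQ_apply]
      map_smul' := by
        intro c x
        apply LinearMap.ext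
        intro q
        obtain ⟨y, rfl⟩ := Ac.mkQ_surjective q
        simp [Submodule.liftQ_apply] } with he2
  have e2_apply : ∀ (x : V₁) (y : A), e2 x (Ac.mkQ y) = ω (y : X) (x : X) :=
    fun _ _ => rfl
  have h2 : Vc ≤ LinearMap.ker e2 := by
    intro x hx
    have hx' : (x : X) ∈ V := hx
    simp only [LinearMap.mem_ker]
    apply LinearMap.ext
    intro q
    obtain ⟨y, rfl⟩ := Ac.mkQ_surjective q
    have hy : (y : X) ∈ A := y.2
    exact (e2_apply x y).trans (hy (x : X) hx')
  -- the induced pairing B on (V₁ ⧸ Vc) × (A ⧸ Ac)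
  set B : (V₁ ⧸ Vc) →ₗ[𝕂] ((A ⧸ Ac) →ₗ[𝕂] 𝕂) := Vc.liftQ e2 h2 with hB
  have B_apply : ∀ (x : V₁) (y : A), B (Vc.mkQ x) (Ac.mkQ y) = ω (y : X) (x : X) :=
    fun _ _ => rfl
  -- B is injective
  have hBinj : Function.Injective B := by
    rw [← LinearMap.ker_eq_bot, eq_bot_iff]
    intro q hq
    obtain ⟨x, rfl⟩ := Vc.mkQ_surjective q
    have hx0 : (x : X) ∈ omegaAnn ω A := by
      intro y hy
      have h := B_apply x ⟨y, hy⟩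
      rw [LinearMap.mem_ker] at hq
      rw [hq] at h
      simp only [LinearMap.zero_apply] at h
      rw [hskew, ← h, neg_zero]
    have hxV : (x : X) ∈ V := by rw [← hVclosed]; exact hx0
    rw [Submodule.mem_bot, Submodule.mkQ_apply, Submodule.Quotient.mk_eq_zero]
    exact hxV
  -- B.flip is injective
  have hBflipinj : Function.Injective B.flip := by
    rw [← LinearMap.ker_eq_bot, eq_bot_iff]
    intro q hq
    obtain ⟨y, rfl⟩ := Ac.mkQ_surjective q
    have hy0 : (y : X) ∈ A₁ := by
      intro x hx
      have h : B.flip (Ac.mkQ y) (Vc.mkQ ⟨x, hx⟩) = ω (y : X) x := B_apply ⟨x, hx⟩ y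
      rw [LinearMap.mem_ker] at hq
      rw [hq] at h
      simp only [LinearMap.zero_apply] at h
      exact h.symm
    rw [Submodule.mem_bot, Submodule.mkQ_apply, Submodule.Quotient.mk_eq_zero]
    exact hy0
  -- finite-dimensionality and rank comparison
  haveI : FiniteDimensional 𝕂 (A ⧸ Ac) :=
    FiniteDimensional.of_injective B.flip hBflipinj
  have hle1 : Module.finrank 𝕂 (A ⧸ Ac) ≤ Module.finrank 𝕂 (V₁ ⧸ Vc) := by
    have := LinearMap.finrank_le_finrank_of_injective hBflipinj
    rwa [Subspace.dual_finrank_eq] at this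
  have hle2 : Module.finrank 𝕂 (V₁ ⧸ Vc) ≤ Module.finrank 𝕂 (A ⧸ Ac) := by
    have := LinearMap.finrank_le_finrank_of_injective hBinj
    rwa [Subspace.dual_finrank_eq] at this
  have hfr : Module.finrank 𝕂 (V₁ ⧸ Vc) = Module.finrank 𝕂 (A ⧸ Ac) :=
    le_antisymm hle2 hle1
  constructor
  · rw [← Module.finrank_eq_rank, ← Module.finrank_eq_rank, hfr]
  -- closedness of V₁
  apply le_antisymm
  · -- omegaAnn ω A₁ ≤ V₁
    intro u hu
    -- the functional on A ⧸ Ac induced by y ↦ ω y u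
    have hψ : Ac ≤ LinearMap.ker ((ω.flip u).comp A.subtype) := by
      intro y hy
      have hy' : (y : X) ∈ A₁ := hy
      have h := hu (y : X) hy'
      simp only [LinearMap.mem_ker, LinearMap.comp_apply, LinearMap.flip_apply,
        Submodule.subtype_apply]
      rw [hskew, h, neg_zero]
    set φ : (A ⧸ Ac) →ₗ[𝕂] 𝕂 := Ac.liftQ ((ω.flip u).comp A.subtype) hψ with hφ
    -- B is surjective
    have hBsurj : Function.Surjective B := by
      have hd : Module.finrank 𝕂 (V₁ ⧸ Vc)
          = Module.finrank 𝕂 (Module.Dual 𝕂 (A ⧸ Ac)) := by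
        rw [Subspace.dual_finrank_eq, hfr]
      exact (LinearMap.injective_iff_surjective_of_finrank_eq_finrank hd).mp hBinj
    obtain ⟨q, hq⟩ := hBsurj φ
    obtain ⟨x, rfl⟩ := Vc.mkQ_surjective q
    have hdiff : u - (x : X) ∈ V := by
      rw [← hVclosed]
      intro y hy
      have h1 : ω y ((x : V₁) : X) = ω y u := by
        have h := B_apply x ⟨y, hy⟩
        rw [hq] at h
        exact h.symm
      rw [hskew]
      simp [map_sub, h1]
    have huv : u = (u - (x : X)) + (x : X) := by abel
    rw [huv]
    exact V₁.add_mem (hle hdiff) x.2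
  · -- V₁ ≤ omegaAnn ω A₁
    intro x hx y hy
    rw [hskew]
    simp [hy x hx]

end Aux

/-- Let `(X, ω)` be a symplectic vector space over `𝕂 ∈ {ℝ, ℂ}`. Let `V` be an `ω`-closed
linear subspace and `V₁ ⊇ V` a linear subspace with `dim (V₁/V) < ∞`. Then
`dim (V₁/V) = dim (V^ω/V₁^ω)` and `V₁` is `ω`-closed. In particular, every
finite-dimensional linear subspace of `X` is `ω`-closed. -/
theorem finite_extension_omegaClosed
    {𝕂 : Type*} [RCLike 𝕂] {X : Type*} [AddCommGroup X] [Module 𝕂 X]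
    (ω : X →ₗ[𝕂] X →ₗ[𝕂] 𝕂)
    (hskew : ∀ x y, ω x y = - ω y x)
    (hnondeg : ∀ x, (∀ y, ω x y = 0) → x = 0)
    (V V₁ : Submodule 𝕂 X)
    (hVclosed : omegaAnn ω (omegaAnn ω V) = V)
    (hle : V ≤ V₁)
    (hfin : FiniteDimensional 𝕂 (V₁ ⧸ V.comap V₁.subtype)) :
    Module.rank 𝕂 (V₁ ⧸ V.comap V₁.subtype)
        = Module.rank 𝕂 ((omegaAnn ω V) ⧸ (omegaAnn ω V₁).comap (omegaAnn ω V).subtype)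
      ∧ omegaAnn ω (omegaAnn ω V₁) = V₁
      ∧ ∀ W : Submodule 𝕂 X, FiniteDimensional 𝕂 ↥W → omegaAnn ω (omegaAnn ω W) = W := by
  obtain ⟨h1, h2⟩ := main_aux ω hskew V V₁ hVclosed hle hfin
  refine ⟨h1, h2, fun W hW => ?_⟩
  have hbot : omegaAnn ω ⊥ = (⊤ : Submodule 𝕂 X) := by
    ext x
    simp only [Submodule.mem_top, iff_true, mem_omegaAnn]
    intro y hy
    rw [Submodule.mem_bot] at hy
    simp [hy]
  have hbotclosed : omegaAnn ω (omegaAnn ω (⊥ : Submodule 𝕂 X)) = ⊥ := by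
    rw [hbot]
    ext x
    simp only [Submodule.mem_bot, mem_omegaAnn]
    constructor
    · intro h
      exact hnondeg x (fun y => h y trivial)
    · intro h y _
      simp [h]
  haveI : FiniteDimensional 𝕂 (W ⧸ (⊥ : Submodule 𝕂 X).comap W.subtype) := by
    infer_instance
  exact (main_aux ω hskew ⊥ W hbotclosed bot_le inferInstance).2
end

section
/- Let (Z, ω) be a symplectic vector space over 𝕂 ∈ {ℝ, ℂ} with linear subspaces X, Y such that Z = X + Y and Z = X^ω + Y^ω. Then: (a) X ∩ Y = {0} and X^ω ∩ Y^ω = {0} (so Z = X ⊕ Y = X^ω ⊕ Y^ω), and X and Y are ω-closed; (b) if V ⊆ X and W ⊆ Y are ω-closed linear subspaces of Z, then V + W is ω-closed. -/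
lemma mem_omegaAnn_iff {𝕂 : Type*} [Field 𝕂] {Z : Type*} [AddCommGroup Z] [Module 𝕂 Z]
    (ω : Z →ₗ[𝕂] Z →ₗ[𝕂] 𝕂) (V : Submodule 𝕂 Z) (x : Z) :
    x ∈ omegaAnn ω V ↔ ∀ y ∈ V, ω x y = 0 := Iff.rfl

lemma omegaAnn_anti {𝕂 : Type*} [Field 𝕂] {Z : Type*} [AddCommGroup Z] [Module 𝕂 Z]
    (ω : Z →ₗ[𝕂] Z →ₗ[𝕂] 𝕂) {V W : Submodule 𝕂 Z} (h : V ≤ W) :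
    omegaAnn ω W ≤ omegaAnn ω V := fun _ hx y hy => hx y (h hy)

lemma le_double_omegaAnn {𝕂 : Type*} [Field 𝕂] {Z : Type*} [AddCommGroup Z] [Module 𝕂 Z]
    (ω : Z →ₗ[𝕂] Z →ₗ[𝕂] 𝕂) (hskew : ∀ x y, ω x y = - ω y x) (V : Submodule 𝕂 Z) :
    V ≤ omegaAnn ω (omegaAnn ω V) := by
  intro v hv a ha
  rw [hskew, ha v hv, neg_zero]

lemma inf_bot_aux {𝕂 : Type*} [Field 𝕂] {Z : Type*} [AddCommGroup Z] [Module 𝕂 Z]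
    (ω : Z →ₗ[𝕂] Z →ₗ[𝕂] 𝕂) (hskew : ∀ x y, ω x y = - ω y x)
    (hnondeg : ∀ x, (∀ y, ω x y = 0) → x = 0)
    (X Y : Submodule 𝕂 Z)
    (hsumAnn : omegaAnn ω X ⊔ omegaAnn ω Y = ⊤) :
    X ⊓ Y = ⊥ := by
  rw [eq_bot_iff]
  intro z hz
  have hz' := Submodule.mem_inf.1 hz
  have : z = 0 := by
    apply hnondeg
    intro w
    have hw : w ∈ omegaAnn ω X ⊔ omegaAnn ω Y := hsumAnn ▸ Submodule.mem_top
    obtain ⟨a, ha, b, hb, rfl⟩ := Submodule.mem_sup.1 hw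
    rw [hskew, map_add, LinearMap.add_apply, ha z hz'.1, hb z hz'.2, add_zero, neg_zero]
  simp [this]

lemma closed_aux {𝕂 : Type*} [Field 𝕂] {Z : Type*} [AddCommGroup Z] [Module 𝕂 Z]
    (ω : Z →ₗ[𝕂] Z →ₗ[𝕂] 𝕂) (hskew : ∀ x y, ω x y = - ω y x)
    (hnondeg : ∀ x, (∀ y, ω x y = 0) → x = 0)
    (X Y : Submodule 𝕂 Z)
    (hsum : X ⊔ Y = ⊤)
    (hsumAnn : omegaAnn ω X ⊔ omegaAnn ω Y = ⊤) :
    omegaAnn ω (omegaAnn ω X) = X := by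
  refine le_antisymm ?_ (le_double_omegaAnn ω hskew X)
  intro z hz
  obtain ⟨x, hx, y, hy, hxy⟩ := Submodule.mem_sup.1 (show z ∈ X ⊔ Y from hsum ▸ Submodule.mem_top)
  have hy0 : y = 0 := by
    apply hnondeg
    intro w
    have hw : w ∈ omegaAnn ω X ⊔ omegaAnn ω Y := hsumAnn ▸ Submodule.mem_top
    obtain ⟨a, ha, b, hb, rfl⟩ := Submodule.mem_sup.1 hw
    have h1 : ω y b = 0 := by rw [hskew, hb y hy, neg_zero]
    have h2 : ω z a = 0 := hz a ha
    have h3 : ω x a = 0 := by rw [hskew, ha x hx, neg_zero]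
    have h4 : ω y a = 0 := by
      have : ω (x + y) a = 0 := by rw [hxy]; exact h2
      rw [map_add, LinearMap.add_apply, h3, zero_add] at this
      exact this
    rw [map_add, h4, h1, add_zero]
  rw [← hxy, hy0, add_zero]
  exact hx

/-- Let `(Z, ω)` be a symplectic vector space over `𝕂 ∈ {ℝ, ℂ}` with linear subspaces `X`, `Y`
such that `Z = X + Y` and `Z = X^ω + Y^ω`. Then (a) `X ∩ Y = {0}` and `X^ω ∩ Y^ω = {0}`
(so `Z = X ⊕ Y = X^ω ⊕ Y^ω`), and `X`, `Y` are `ω`-closed; (b) if `V ⊆ X` and `W ⊆ Y` are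
`ω`-closed, then `V + W` is `ω`-closed. -/
theorem closed_sum
    {𝕂 : Type*} [RCLike 𝕂] {Z : Type*} [AddCommGroup Z] [Module 𝕂 Z]
    (ω : Z →ₗ[𝕂] Z →ₗ[𝕂] 𝕂)
    (hskew : ∀ x y, ω x y = - ω y x)
    (hnondeg : ∀ x, (∀ y, ω x y = 0) → x = 0)
    (X Y : Submodule 𝕂 Z)
    (hsum : X ⊔ Y = ⊤)
    (hsumAnn : omegaAnn ω X ⊔ omegaAnn ω Y = ⊤) :
    X ⊓ Y = ⊥
      ∧ omegaAnn ω X ⊓ omegaAnn ω Y = ⊥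
      ∧ omegaAnn ω (omegaAnn ω X) = X
      ∧ omegaAnn ω (omegaAnn ω Y) = Y
      ∧ ∀ V W : Submodule 𝕂 Z, V ≤ X → W ≤ Y →
          omegaAnn ω (omegaAnn ω V) = V → omegaAnn ω (omegaAnn ω W) = W →
          omegaAnn ω (omegaAnn ω (V ⊔ W)) = V ⊔ W := by
  have hXann : ∀ x ∈ X, ∀ a ∈ omegaAnn ω X, ω x a = 0 := by
    intro x hx a ha; rw [hskew, ha x hx, neg_zero]
  refine ⟨inf_bot_aux ω hskew hnondeg X Y hsumAnn, ?_, ?_, ?_, ?_⟩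
  · -- X^ω ⊓ Y^ω = ⊥
    rw [eq_bot_iff]
    intro z hz
    have hz' := Submodule.mem_inf.1 hz
    have : z = 0 := by
      apply hnondeg
      intro w
      obtain ⟨a, ha, b, hb, rfl⟩ :=
        Submodule.mem_sup.1 (show w ∈ X ⊔ Y from hsum ▸ Submodule.mem_top)
      rw [map_add, hz'.1 a ha, hz'.2 b hb, add_zero]
    simp [this]
  · exact closed_aux ω hskew hnondeg X Y hsum hsumAnn
  · exact closed_aux ω hskew hnondeg Y X (by rwa [sup_comm]) (by rwa [sup_comm])
  · intro V W hVX hWY hV hW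
    refine le_antisymm ?_ (le_double_omegaAnn ω hskew _)
    intro z hz
    obtain ⟨x, hx, y, hy, hxy⟩ :=
      Submodule.mem_sup.1 (show z ∈ X ⊔ Y from hsum ▸ Submodule.mem_top)
    -- z annihilates V^ω ⊓ W^ω
    have hzVW : ∀ c, c ∈ omegaAnn ω V → c ∈ omegaAnn ω W → ω z c = 0 := by
      intro c hc1 hc2
      apply hz
      intro u hu
      obtain ⟨v, hv, w', hw', rfl⟩ := Submodule.mem_sup.1 hu
      rw [map_add, hc1 v hv, hc2 w' hw', add_zero]
    have hXleV : omegaAnn ω X ≤ omegaAnn ω V := omegaAnn_anti ω hVX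
    have hYleW : omegaAnn ω Y ≤ omegaAnn ω W := omegaAnn_anti ω hWY
    have hxV : x ∈ V := by
      rw [← hV]
      intro a ha
      obtain ⟨a₁, ha₁, a₂, ha₂, haa⟩ :=
        Submodule.mem_sup.1 (show a ∈ omegaAnn ω X ⊔ omegaAnn ω Y from
          hsumAnn ▸ Submodule.mem_top)
      have ha₂V : a₂ ∈ omegaAnn ω V := by
        have : a₂ = a - a₁ := by rw [← haa]; abel
        rw [this]; exact Submodule.sub_mem _ ha (hXleV ha₁)
      have ha₂W : a₂ ∈ omegaAnn ω W := hYleW ha₂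
      have h1 : ω z a₂ = 0 := hzVW a₂ ha₂V ha₂W
      have h2 : ω y a₂ = 0 := by rw [hskew, ha₂ y hy, neg_zero]
      have h3 : ω x a₂ = 0 := by
        have : ω (x + y) a₂ = 0 := by rw [hxy]; exact h1
        rw [map_add, LinearMap.add_apply, h2, add_zero] at this
        exact this
      have h4 : ω x a₁ = 0 := by rw [hskew, ha₁ x hx, neg_zero]
      rw [← haa, map_add, h4, h3, add_zero]
    have hyW : y ∈ W := by
      rw [← hW]
      intro b hb
      obtain ⟨b₁, hb₁, b₂, hb₂, hbb⟩ :=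
        Submodule.mem_sup.1 (show b ∈ omegaAnn ω X ⊔ omegaAnn ω Y from
          hsumAnn ▸ Submodule.mem_top)
      have hb₁W : b₁ ∈ omegaAnn ω W := by
        have : b₁ = b - b₂ := by rw [← hbb]; abel
        rw [this]; exact Submodule.sub_mem _ hb (hYleW hb₂)
      have hb₁V : b₁ ∈ omegaAnn ω V := hXleV hb₁
      have h1 : ω z b₁ = 0 := hzVW b₁ hb₁V hb₁W
      have h2 : ω x b₁ = 0 := by rw [hskew, hb₁ x hx, neg_zero]
      have h3 : ω y b₁ = 0 := by
        have : ω (x + y) b₁ = 0 := by rw [hxy]; exact h1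
        rw [map_add, LinearMap.add_apply, h2, zero_add] at this
        exact this
      have h4 : ω y b₂ = 0 := by rw [hskew, hb₂ y hy, neg_zero]
      rw [← hbb, map_add, h3, h4, add_zero]
    rw [← hxy]
    exact Submodule.add_mem_sup hxV hyW
end

section
/- Let V be a vector space over a field 𝕂 with three linear subspaces V₁, V₂, V₃. Then the linear relation A := {(v₂, v₃) ∈ V₂ × V₃ : v₂ + v₃ ∈ V₁} induces a linear isomorphism from the quotient (V₂ ∩ (V₁ + V₃))/(V₁ ∩ V₂) onto the quotient (V₃ ∩ (V₁ + V₂))/(V₁ ∩ V₃); in particular these two quotient spaces are linearly isomorphic. -/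
section Aux

variable {𝕂 : Type*} [Field 𝕂] {V : Type*} [AddCommGroup V] [Module 𝕂 V]
    (V₁ V₂ V₃ : Submodule 𝕂 V)

private lemma exists_partner (x : ↥(V₂ ⊓ (V₁ ⊔ V₃))) :
    ∃ y : ↥(V₃ ⊓ (V₁ ⊔ V₂)), (x : V) + (y : V) ∈ V₁ := by
  obtain ⟨hx2, hx13⟩ := x.2
  obtain ⟨v₁, hv₁, v₃, hv₃, hsum⟩ := Submodule.mem_sup.mp hx13
  refine ⟨⟨-v₃, ⟨neg_mem hv₃, ?_⟩⟩, ?_⟩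
  · have : -v₃ = v₁ + (-(x : V)) := by rw [← hsum]; abel
    rw [this]
    exact Submodule.add_mem_sup hv₁ (neg_mem hx2)
  · show (x : V) + (-v₃) ∈ V₁
    have : (x : V) + (-v₃) = v₁ := by rw [← hsum]; abel
    rw [this]; exact hv₁

private noncomputable def partner (x : ↥(V₂ ⊓ (V₁ ⊔ V₃))) : ↥(V₃ ⊓ (V₁ ⊔ V₂)) :=
  (exists_partner V₁ V₂ V₃ x).choose

private lemma partner_spec (x : ↥(V₂ ⊓ (V₁ ⊔ V₃))) :
    (x : V) + (partner V₁ V₂ V₃ x : V) ∈ V₁ :=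
  (exists_partner V₁ V₂ V₃ x).choose_spec

private lemma mk_eq_of_rel {x : ↥(V₂ ⊓ (V₁ ⊔ V₃))} {y y' : ↥(V₃ ⊓ (V₁ ⊔ V₂))}
    (h : (x : V) + (y : V) ∈ V₁) (h' : (x : V) + (y' : V) ∈ V₁) :
    (Submodule.Quotient.mk y :
        ↥(V₃ ⊓ (V₁ ⊔ V₂)) ⧸ (V₁ ⊓ V₃).comap (V₃ ⊓ (V₁ ⊔ V₂)).subtype) =
      Submodule.Quotient.mk y' := by
  rw [Submodule.Quotient.eq]
  have h1 : (y : V) - (y' : V) ∈ V₁ := by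
    have := sub_mem h h'
    simpa [add_sub_add_left_eq_sub] using this
  have hmem : ((y - y' : ↥(V₃ ⊓ (V₁ ⊔ V₂))) : V) ∈ V₁ ⊓ V₃ := by
    push_cast
    exact ⟨h1, sub_mem y.2.1 y'.2.1⟩
  exact hmem

private noncomputable def rawMap :
    ↥(V₂ ⊓ (V₁ ⊔ V₃)) →ₗ[𝕂]
      (↥(V₃ ⊓ (V₁ ⊔ V₂)) ⧸ (V₁ ⊓ V₃).comap (V₃ ⊓ (V₁ ⊔ V₂)).subtype) where
  toFun x := Submodule.Quotient.mk (partner V₁ V₂ V₃ x)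
  map_add' x x' := by
    have hrel : ((x + x' : ↥(V₂ ⊓ (V₁ ⊔ V₃))) : V) +
        ((partner V₁ V₂ V₃ x + partner V₁ V₂ V₃ x' : ↥(V₃ ⊓ (V₁ ⊔ V₂))) : V) ∈ V₁ := by
      have heq : ((x + x' : ↥(V₂ ⊓ (V₁ ⊔ V₃))) : V) +
          ((partner V₁ V₂ V₃ x + partner V₁ V₂ V₃ x' : ↥(V₃ ⊓ (V₁ ⊔ V₂))) : V)
          = ((x : V) + (partner V₁ V₂ V₃ x : V)) +
            ((x' : V) + (partner V₁ V₂ V₃ x' : V)) := by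
        push_cast; abel
      rw [heq]
      exact add_mem (partner_spec V₁ V₂ V₃ x) (partner_spec V₁ V₂ V₃ x')
    rw [mk_eq_of_rel V₁ V₂ V₃ (partner_spec V₁ V₂ V₃ (x + x')) hrel,
      Submodule.Quotient.mk_add]
  map_smul' c x := by
    have hrel : ((c • x : ↥(V₂ ⊓ (V₁ ⊔ V₃))) : V) +
        ((c • partner V₁ V₂ V₃ x : ↥(V₃ ⊓ (V₁ ⊔ V₂))) : V) ∈ V₁ := by
      have heq : ((c • x : ↥(V₂ ⊓ (V₁ ⊔ V₃))) : V) +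
          ((c • partner V₁ V₂ V₃ x : ↥(V₃ ⊓ (V₁ ⊔ V₂))) : V)
          = c • ((x : V) + (partner V₁ V₂ V₃ x : V)) := by
        push_cast; rw [smul_add]
      rw [heq]
      exact Submodule.smul_mem _ c (partner_spec V₁ V₂ V₃ x)
    rw [mk_eq_of_rel V₁ V₂ V₃ (partner_spec V₁ V₂ V₃ (c • x)) hrel,
      Submodule.Quotient.mk_smul]
    rfl

private lemma rawMap_eq {x : ↥(V₂ ⊓ (V₁ ⊔ V₃))} {y : ↥(V₃ ⊓ (V₁ ⊔ V₂))}
    (h : (x : V) + (y : V) ∈ V₁) :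
    rawMap V₁ V₂ V₃ x = Submodule.Quotient.mk y :=
  mk_eq_of_rel V₁ V₂ V₃ (partner_spec V₁ V₂ V₃ x) h

private lemma rawMap_ker :
    (V₁ ⊓ V₂).comap (V₂ ⊓ (V₁ ⊔ V₃)).subtype ≤ LinearMap.ker (rawMap V₁ V₂ V₃) := by
  intro x hx
  have hx' : (x : V) ∈ V₁ ⊓ V₂ := hx
  have h0 : (x : V) + ((0 : ↥(V₃ ⊓ (V₁ ⊔ V₂))) : V) ∈ V₁ := by
    simpa using hx'.1
  rw [LinearMap.mem_ker, rawMap_eq V₁ V₂ V₃ h0]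
  exact Submodule.Quotient.mk_zero _

private noncomputable def quotMap :
    (↥(V₂ ⊓ (V₁ ⊔ V₃)) ⧸ (V₁ ⊓ V₂).comap (V₂ ⊓ (V₁ ⊔ V₃)).subtype) →ₗ[𝕂]
      (↥(V₃ ⊓ (V₁ ⊔ V₂)) ⧸ (V₁ ⊓ V₃).comap (V₃ ⊓ (V₁ ⊔ V₂)).subtype) :=
  Submodule.liftQ _ (rawMap V₁ V₂ V₃) (rawMap_ker V₁ V₂ V₃)

private lemma quotMap_mk {x : ↥(V₂ ⊓ (V₁ ⊔ V₃))} {y : ↥(V₃ ⊓ (V₁ ⊔ V₂))}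
    (h : (x : V) + (y : V) ∈ V₁) :
    quotMap V₁ V₂ V₃ (Submodule.Quotient.mk x) = Submodule.Quotient.mk y :=
  rawMap_eq V₁ V₂ V₃ h

private lemma quotMap_inv :
    (quotMap V₁ V₃ V₂).comp (quotMap V₁ V₂ V₃) = LinearMap.id := by
  have key : ∀ x : ↥(V₂ ⊓ (V₁ ⊔ V₃)),
      quotMap V₁ V₃ V₂ (quotMap V₁ V₂ V₃ (Submodule.Quotient.mk x)) =
        Submodule.Quotient.mk x := by
    intro x
    obtain ⟨y, hy⟩ := exists_partner V₁ V₂ V₃ x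
    rw [quotMap_mk V₁ V₂ V₃ hy, quotMap_mk V₁ V₃ V₂ (by rwa [add_comm])]
  ext x
  exact key x

end Aux

/-- Let `V` be a vector space with linear subspaces `V₁, V₂, V₃`. Then the linear relation
`A := {(v₂, v₃) ∈ V₂ × V₃ : v₂ + v₃ ∈ V₁}` induces a linear isomorphism from
`(V₂ ∩ (V₁ + V₃))/(V₁ ∩ V₂)` onto `(V₃ ∩ (V₁ + V₂))/(V₁ ∩ V₃)`; in particular these two
quotient spaces are linearly isomorphic. -/
theorem relation_induced_iso
    {𝕂 : Type*} [Field 𝕂] {V : Type*} [AddCommGroup V] [Module 𝕂 V]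
    (V₁ V₂ V₃ : Submodule 𝕂 V) :
    ∃ f : (↥(V₂ ⊓ (V₁ ⊔ V₃)) ⧸ (V₁ ⊓ V₂).comap (V₂ ⊓ (V₁ ⊔ V₃)).subtype) ≃ₗ[𝕂]
          (↥(V₃ ⊓ (V₁ ⊔ V₂)) ⧸ (V₁ ⊓ V₃).comap (V₃ ⊓ (V₁ ⊔ V₂)).subtype),
      ∀ (x : ↥(V₂ ⊓ (V₁ ⊔ V₃))) (y : ↥(V₃ ⊓ (V₁ ⊔ V₂))),
        (x : V) + (y : V) ∈ V₁ →
        f (Submodule.Quotient.mk x) = Submodule.Quotient.mk y := by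
  refine ⟨LinearEquiv.ofLinear (quotMap V₁ V₂ V₃) (quotMap V₁ V₃ V₂)
    (quotMap_inv V₁ V₃ V₂) (quotMap_inv V₁ V₂ V₃), fun x y h => ?_⟩
  exact quotMap_mk V₁ V₂ V₃ h
end

section
/- Let V be a vector space over a field 𝕂 with three linear subspaces V₁, V₂, V₃ such that dim V₁ + dim(V₂ ∩ V₃) < ∞. Then dim(V₂ ∩ (V₁ + V₃)) + dim(V₁ ∩ V₃) = dim(V₁ ∩ (V₂ + V₃)) + dim(V₂ ∩ V₃) = dim V₁ − dim((V₁ + V₂ + V₃)/(V₂ + V₃)) + dim(V₂ ∩ V₃), and in particular all the dimensions appearing are finite. -/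
set_option maxHeartbeats 1000000
set_option synthInstance.maxHeartbeats 400000

open Submodule Module

/-- Let `V` be a vector space with linear subspaces `V₁, V₂, V₃` such that
`dim V₁ + dim (V₂ ∩ V₃) < ∞`. Then
`dim (V₂ ∩ (V₁ + V₃)) + dim (V₁ ∩ V₃) = dim (V₁ ∩ (V₂ + V₃)) + dim (V₂ ∩ V₃)
  = dim V₁ − dim ((V₁ + V₂ + V₃)/(V₂ + V₃)) + dim (V₂ ∩ V₃)`,
and in particular all the dimensions appearing are finite. (The identity involving the
subtraction is stated in the equivalent additive form
`dim (V₁ ∩ (V₂ + V₃)) + dim ((V₁ + V₂ + V₃)/(V₂ + V₃)) = dim V₁`.) -/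
theorem dim_intersection_formula
    {𝕂 : Type*} [Field 𝕂] {V : Type*} [AddCommGroup V] [Module 𝕂 V]
    (V₁ V₂ V₃ : Submodule 𝕂 V)
    (h₁ : FiniteDimensional 𝕂 ↥V₁)
    (h₂ : FiniteDimensional 𝕂 ↥(V₂ ⊓ V₃)) :
    FiniteDimensional 𝕂 ↥(V₂ ⊓ (V₁ ⊔ V₃))
      ∧ FiniteDimensional 𝕂 ↥(V₁ ⊓ (V₂ ⊔ V₃))
      ∧ FiniteDimensional 𝕂 ↥(V₁ ⊓ V₃)
      ∧ FiniteDimensional 𝕂 (↥(V₁ ⊔ V₂ ⊔ V₃) ⧸ (V₂ ⊔ V₃).comap (V₁ ⊔ V₂ ⊔ V₃).subtype)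
      ∧ Module.finrank 𝕂 ↥(V₂ ⊓ (V₁ ⊔ V₃)) + Module.finrank 𝕂 ↥(V₁ ⊓ V₃)
          = Module.finrank 𝕂 ↥(V₁ ⊓ (V₂ ⊔ V₃)) + Module.finrank 𝕂 ↥(V₂ ⊓ V₃)
      ∧ Module.finrank 𝕂 ↥(V₁ ⊓ (V₂ ⊔ V₃))
            + Module.finrank 𝕂 (↥(V₁ ⊔ V₂ ⊔ V₃) ⧸ (V₂ ⊔ V₃).comap (V₁ ⊔ V₂ ⊔ V₃).subtype)
          = Module.finrank 𝕂 ↥V₁ := by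
  rw [sup_assoc]
  have hq_fin : FiniteDimensional 𝕂 ↥(V₁ ⊓ (V₂ ⊔ V₃)) :=
    Submodule.finiteDimensional_of_le inf_le_left
  have h13_fin : FiniteDimensional 𝕂 ↥(V₁ ⊓ V₃) :=
    Submodule.finiteDimensional_of_le inf_le_left
  -- equalities of submodules
  have h1 : V₂ ⊓ (V₁ ⊔ V₃) ⊓ V₃ = V₂ ⊓ V₃ := by
    rw [inf_assoc, inf_eq_right.mpr (le_sup_right : V₃ ≤ V₁ ⊔ V₃)]
  have h2 : V₁ ⊓ (V₂ ⊔ V₃) ⊓ V₃ = V₁ ⊓ V₃ := by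
    rw [inf_assoc, inf_eq_right.mpr (le_sup_right : V₃ ≤ V₂ ⊔ V₃)]
  have h34 : V₂ ⊓ (V₁ ⊔ V₃) ⊔ V₃ = V₁ ⊓ (V₂ ⊔ V₃) ⊔ V₃ := by
    rw [inf_comm V₂, inf_sup_assoc_of_le _ (le_sup_right : V₃ ≤ V₁ ⊔ V₃),
      inf_comm V₁, inf_sup_assoc_of_le _ (le_sup_right : V₃ ≤ V₂ ⊔ V₃), inf_comm]
  -- second isomorphism theorem equivalences
  have e2 := LinearMap.quotientInfEquivSupQuotient (V₂ ⊓ (V₁ ⊔ V₃)) V₃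
  rw [← Submodule.comap_inf, h34, h1] at e2
  have e3 := LinearMap.quotientInfEquivSupQuotient (V₁ ⊓ (V₂ ⊔ V₃)) V₃
  rw [← Submodule.comap_inf, h2] at e3
  have e : (↥(V₂ ⊓ (V₁ ⊔ V₃)) ⧸ comap (V₂ ⊓ (V₁ ⊔ V₃)).subtype (V₂ ⊓ V₃)) ≃ₗ[𝕂]
      (↥(V₁ ⊓ (V₂ ⊔ V₃)) ⧸ comap (V₁ ⊓ (V₂ ⊔ V₃)).subtype (V₁ ⊓ V₃)) :=
    e2.trans e3.symm
  -- finiteness of V₂ ⊓ (V₁ ⊔ V₃)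
  have h23le : V₂ ⊓ V₃ ≤ V₂ ⊓ (V₁ ⊔ V₃) :=
    inf_le_inf_left V₂ (le_sup_right : V₃ ≤ V₁ ⊔ V₃)
  have h13le : V₁ ⊓ V₃ ≤ V₁ ⊓ (V₂ ⊔ V₃) :=
    inf_le_inf_left V₁ (le_sup_right : V₃ ≤ V₂ ⊔ V₃)
  have hcomap23 : FiniteDimensional 𝕂 ↥(comap (V₂ ⊓ (V₁ ⊔ V₃)).subtype (V₂ ⊓ V₃)) :=
    Module.Finite.equiv (Submodule.comapSubtypeEquivOfLe h23le).symm
  have hquot : FiniteDimensional 𝕂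
      (↥(V₂ ⊓ (V₁ ⊔ V₃)) ⧸ comap (V₂ ⊓ (V₁ ⊔ V₃)).subtype (V₂ ⊓ V₃)) :=
    Module.Finite.equiv e.symm
  have hp_fin : FiniteDimensional 𝕂 ↥(V₂ ⊓ (V₁ ⊔ V₃)) := by
    have hr := Submodule.rank_quotient_add_rank (comap (V₂ ⊓ (V₁ ⊔ V₃)).subtype (V₂ ⊓ V₃))
    exact Module.rank_lt_aleph0_iff.mp (by
      rw [← hr]
      exact Cardinal.add_lt_aleph0 (Module.rank_lt_aleph0 _ _) (Module.rank_lt_aleph0 _ _))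
  -- quotient part
  have eQ := LinearMap.quotientInfEquivSupQuotient V₁ (V₂ ⊔ V₃)
  have hQ_fin : FiniteDimensional 𝕂 (↥(V₁ ⊔ (V₂ ⊔ V₃)) ⧸ comap (V₁ ⊔ (V₂ ⊔ V₃)).subtype (V₂ ⊔ V₃)) :=
    Module.Finite.equiv eQ
  refine ⟨hp_fin, hq_fin, h13_fin, hQ_fin, ?_, ?_⟩
  · -- symmetric identity
    have r2 := Submodule.finrank_quotient_add_finrank (comap (V₂ ⊓ (V₁ ⊔ V₃)).subtype (V₂ ⊓ V₃))
    have r3 := Submodule.finrank_quotient_add_finrank (comap (V₁ ⊓ (V₂ ⊔ V₃)).subtype (V₁ ⊓ V₃))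
    rw [(Submodule.comapSubtypeEquivOfLe h23le).finrank_eq] at r2
    rw [(Submodule.comapSubtypeEquivOfLe h13le).finrank_eq] at r3
    rw [e.finrank_eq] at r2
    omega
  · -- rank-nullity identity
    have r1 := Submodule.finrank_quotient_add_finrank (comap V₁.subtype (V₁ ⊓ (V₂ ⊔ V₃)))
    rw [(Submodule.comapSubtypeEquivOfLe (inf_le_left : V₁ ⊓ (V₂ ⊔ V₃) ≤ V₁)).finrank_eq] at r1
    rw [← Submodule.comap_inf] at eQ
    rw [eQ.finrank_eq] at r1
    omega
end

section
/- Let X be a vector space over a field 𝕂 and let M₁, M₂, N₁, N₂ be linear subspaces of X. Assume M₁ ∼f M₂ and N₁ ∼f N₂ (finite changes), and assume (M₂, N₂) is a Fredholm pair of subspaces. Then (M₁, N₁) is a Fredholm pair and Index(M₁, N₁) = Index(M₂, N₂) + [M₁ − M₂] + [N₁ − N₂]. -/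
set_option maxHeartbeats 1000000
set_option synthInstance.maxHeartbeats 1000000

open Module Submodule

section Aux

variable {𝕂 : Type*} [Field 𝕂] {V : Type*} [AddCommGroup V] [Module 𝕂 V]

/-- An extension of a finite-dimensional space by a finite-dimensional space is
finite-dimensional. -/
lemma fd_ext' (S : Submodule 𝕂 V) (h1 : FiniteDimensional 𝕂 ↥S)
    (h2 : FiniteDimensional 𝕂 (V ⧸ S)) : FiniteDimensional 𝕂 V := by
  obtain ⟨C, hC⟩ := S.exists_isCompl
  haveI : FiniteDimensional 𝕂 ↥C := (Submodule.quotientEquivOfIsCompl S C hC).finiteDimensional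
  haveI := Submodule.finiteDimensional_sup S C
  have htop : S ⊔ C = ⊤ := hC.sup_eq_top
  rw [htop] at this
  exact Submodule.topEquiv.finiteDimensional

/-- For submodules `p ≤ q` of `V`, the quotient `q/p` is isomorphic to the image of `q`
in `V ⧸ p`. -/
noncomputable def subQuotEquivMap' (p q : Submodule 𝕂 V) :
    (↥q ⧸ p.comap q.subtype) ≃ₗ[𝕂] ↥(q.map p.mkQ) := by
  have hker : LinearMap.ker (p.mkQ ∘ₗ q.subtype) = p.comap q.subtype := by
    rw [LinearMap.ker_comp, Submodule.ker_mkQ]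
  have hrange : LinearMap.range (p.mkQ ∘ₗ q.subtype) = q.map p.mkQ := by
    rw [LinearMap.range_comp, Submodule.range_subtype]
  exact (Submodule.quotEquivOfEq _ _ hker.symm) ≪≫ₗ
    (p.mkQ ∘ₗ q.subtype).quotKerEquivRange ≪≫ₗ (LinearEquiv.ofEq _ _ hrange)

lemma tower_fd_quot' (p q : Submodule 𝕂 V) (h : p ≤ q)
    (hp : FiniteDimensional 𝕂 (V ⧸ p)) : FiniteDimensional 𝕂 (V ⧸ q) :=
  (Submodule.quotientQuotientEquivQuotient p q h).finiteDimensional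

lemma tower_fd_sub' (p q : Submodule 𝕂 V)
    (hp : FiniteDimensional 𝕂 (V ⧸ p)) :
    FiniteDimensional 𝕂 (↥q ⧸ p.comap q.subtype) :=
  (subQuotEquivMap' p q).symm.finiteDimensional

lemma tower_finrank' (p q : Submodule 𝕂 V) (h : p ≤ q)
    (hp : FiniteDimensional 𝕂 (V ⧸ p)) :
    finrank 𝕂 (V ⧸ p) = finrank 𝕂 (V ⧸ q) + finrank 𝕂 (↥q ⧸ p.comap q.subtype) := by
  have key := Submodule.finrank_quotient_add_finrank (q.map p.mkQ)
  rw [(Submodule.quotientQuotientEquivQuotient p q h).finrank_eq,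
    ← (subQuotEquivMap' p q).finrank_eq] at key
  omega

lemma tower_fd_rev' (p q : Submodule 𝕂 V) (h : p ≤ q)
    (h1 : FiniteDimensional 𝕂 (V ⧸ q))
    (h2 : FiniteDimensional 𝕂 (↥q ⧸ p.comap q.subtype)) :
    FiniteDimensional 𝕂 (V ⧸ p) := by
  haveI : FiniteDimensional 𝕂 ↥(q.map p.mkQ) := (subQuotEquivMap' p q).finiteDimensional
  haveI : FiniteDimensional 𝕂 ((V ⧸ p) ⧸ q.map p.mkQ) :=
    (Submodule.quotientQuotientEquivQuotient p q h).symm.finiteDimensional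
  exact fd_ext' (q.map p.mkQ) ‹_› ‹_›

/-- Relativization: for `A` and `B ≤ C` submodules of `V`, the quotient of `B ∩ C = B` by `A`,
computed inside `C`, agrees with the one computed inside `V`. -/
noncomputable def quotRelEquiv' (A B C : Submodule 𝕂 V) (hBC : B ≤ C) :
    (↥(B.comap C.subtype) ⧸ (A.comap C.subtype).comap (B.comap C.subtype).subtype)
      ≃ₗ[𝕂] (↥B ⧸ A.comap B.subtype) := by
  refine Submodule.Quotient.equiv _ _ (Submodule.comapSubtypeEquivOfLe hBC) ?_
  ext y
  simp only [Submodule.mem_map, Submodule.mem_comap, Submodule.coe_subtype]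
  constructor
  · rintro ⟨z, hz, rfl⟩
    simpa [Submodule.comapSubtypeEquivOfLe] using hz
  · intro hy
    exact ⟨⟨⟨y.1, hBC y.2⟩, y.2⟩, hy, by simp [Submodule.comapSubtypeEquivOfLe]⟩

variable {X : Type*} [AddCommGroup X] [Module 𝕂 X]

lemma step_fd_core' (M' M N : Submodule 𝕂 X) (h : M' ≤ M)
    (hq : FiniteDimensional 𝕂 (↥M ⧸ M'.comap M.subtype)) :
    FiniteDimensional 𝕂 (↥(M ⊔ N) ⧸ (M' ⊔ N).comap (M ⊔ N).subtype) ∧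
    FiniteDimensional 𝕂 (↥(M ⊓ N) ⧸ (M' ⊓ N).comap (M ⊓ N).subtype) := by
  set K : Submodule 𝕂 X := M' ⊔ (M ⊓ N) with hKdef
  have hK : K ≤ M := sup_le h inf_le_left
  have e1 : (M ⊓ N) ⊓ M' = M' ⊓ N := by
    rw [inf_comm, ← inf_assoc, inf_eq_left.mpr h]
  have e2 : (M ⊓ N) ⊔ M' = K := sup_comm _ _
  have isoA := LinearMap.quotientInfEquivSupQuotient (M ⊓ N) M'
  rw [← Submodule.comap_inf, e1, e2] at isoA
  have e3 : M ⊓ (M' ⊔ N) = K := by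
    rw [inf_comm, sup_inf_assoc_of_le _ h, inf_comm N M]
  have e4 : M ⊔ (M' ⊔ N) = M ⊔ N := by rw [← sup_assoc, sup_eq_left.mpr h]
  have isoB := LinearMap.quotientInfEquivSupQuotient M (M' ⊔ N)
  rw [← Submodule.comap_inf, e3, e4] at isoB
  have hpq : M'.comap M.subtype ≤ K.comap M.subtype := Submodule.comap_mono le_sup_left
  have relE := quotRelEquiv' M' K M hK
  have fdMq : FiniteDimensional 𝕂 (↥M ⧸ K.comap M.subtype) :=
    tower_fd_quot' _ _ hpq hq
  have fdsub : FiniteDimensional 𝕂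
      (↥(K.comap M.subtype) ⧸ (M'.comap M.subtype).comap (K.comap M.subtype).subtype) :=
    tower_fd_sub' _ _ hq
  haveI := fdMq
  haveI := fdsub
  exact ⟨(isoB.finiteDimensional), ((relE ≪≫ₗ isoA.symm).finiteDimensional)⟩

lemma step_finrank' (M' M N : Submodule 𝕂 X) (h : M' ≤ M)
    (hq : FiniteDimensional 𝕂 (↥M ⧸ M'.comap M.subtype)) :
    finrank 𝕂 (↥M ⧸ M'.comap M.subtype)
      = finrank 𝕂 (↥(M ⊔ N) ⧸ (M' ⊔ N).comap (M ⊔ N).subtype)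
        + finrank 𝕂 (↥(M ⊓ N) ⧸ (M' ⊓ N).comap (M ⊓ N).subtype) := by
  set K : Submodule 𝕂 X := M' ⊔ (M ⊓ N) with hKdef
  have hK : K ≤ M := sup_le h inf_le_left
  have e1 : (M ⊓ N) ⊓ M' = M' ⊓ N := by
    rw [inf_comm, ← inf_assoc, inf_eq_left.mpr h]
  have e2 : (M ⊓ N) ⊔ M' = K := sup_comm _ _
  have isoA := LinearMap.quotientInfEquivSupQuotient (M ⊓ N) M'
  rw [← Submodule.comap_inf, e1, e2] at isoA
  have e3 : M ⊓ (M' ⊔ N) = K := by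
    rw [inf_comm, sup_inf_assoc_of_le _ h, inf_comm N M]
  have e4 : M ⊔ (M' ⊔ N) = M ⊔ N := by rw [← sup_assoc, sup_eq_left.mpr h]
  have isoB := LinearMap.quotientInfEquivSupQuotient M (M' ⊔ N)
  rw [← Submodule.comap_inf, e3, e4] at isoB
  have hpq : M'.comap M.subtype ≤ K.comap M.subtype := Submodule.comap_mono le_sup_left
  have relE := quotRelEquiv' M' K M hK
  have key := tower_finrank' (M'.comap M.subtype) (K.comap M.subtype) hpq hq
  rw [isoB.finrank_eq, (relE ≪≫ₗ isoA.symm).finrank_eq] at key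
  exact key

lemma step_down' (M' M N : Submodule 𝕂 X) (h : M' ≤ M)
    (hq : FiniteDimensional 𝕂 (↥M ⧸ M'.comap M.subtype))
    (h1 : FiniteDimensional 𝕂 ↥(M ⊓ N))
    (h2 : FiniteDimensional 𝕂 (X ⧸ (M ⊔ N))) :
    FiniteDimensional 𝕂 ↥(M' ⊓ N) ∧ FiniteDimensional 𝕂 (X ⧸ (M' ⊔ N)) ∧
    (finrank 𝕂 ↥(M ⊓ N) : ℤ) - (finrank 𝕂 (X ⧸ (M ⊔ N)) : ℤ)
      = ((finrank 𝕂 ↥(M' ⊓ N) : ℤ) - (finrank 𝕂 (X ⧸ (M' ⊔ N)) : ℤ))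
        + (finrank 𝕂 (↥M ⧸ M'.comap M.subtype) : ℤ) := by
  obtain ⟨fdSup, fdInf⟩ := step_fd_core' M' M N h hq
  haveI := h1; haveI := h2
  have hle : M' ⊓ N ≤ M ⊓ N := inf_le_inf_right N h
  have fd1 : FiniteDimensional 𝕂 ↥(M' ⊓ N) := Submodule.finiteDimensional_of_le hle
  have fd2 : FiniteDimensional 𝕂 (X ⧸ (M' ⊔ N)) :=
    tower_fd_rev' (M' ⊔ N) (M ⊔ N) (sup_le_sup_right h N) h2 fdSup
  refine ⟨fd1, fd2, ?_⟩
  have eInf : finrank 𝕂 (↥(M ⊓ N) ⧸ (M' ⊓ N).comap (M ⊓ N).subtype)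
      + finrank 𝕂 ↥((M' ⊓ N).comap (M ⊓ N).subtype) = finrank 𝕂 ↥(M ⊓ N) :=
    Submodule.finrank_quotient_add_finrank _
  have eInf' : finrank 𝕂 ↥((M' ⊓ N).comap (M ⊓ N).subtype) = finrank 𝕂 ↥(M' ⊓ N) :=
    (Submodule.comapSubtypeEquivOfLe hle).finrank_eq
  have eSup : finrank 𝕂 (X ⧸ (M' ⊔ N)) = finrank 𝕂 (X ⧸ (M ⊔ N))
      + finrank 𝕂 (↥(M ⊔ N) ⧸ (M' ⊔ N).comap (M ⊔ N).subtype) :=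
    tower_finrank' _ _ (sup_le_sup_right h N) fd2
  have eM := step_finrank' M' M N h hq
  omega

lemma step_up' (M' M N : Submodule 𝕂 X) (h : M' ≤ M)
    (hq : FiniteDimensional 𝕂 (↥M ⧸ M'.comap M.subtype))
    (h1 : FiniteDimensional 𝕂 ↥(M' ⊓ N))
    (h2 : FiniteDimensional 𝕂 (X ⧸ (M' ⊔ N))) :
    FiniteDimensional 𝕂 ↥(M ⊓ N) ∧ FiniteDimensional 𝕂 (X ⧸ (M ⊔ N)) := by
  obtain ⟨fdSup, fdInf⟩ := step_fd_core' M' M N h hq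
  have hle : M' ⊓ N ≤ M ⊓ N := inf_le_inf_right N h
  haveI : FiniteDimensional 𝕂 ↥((M' ⊓ N).comap (M ⊓ N).subtype) :=
    (Submodule.comapSubtypeEquivOfLe hle).symm.finiteDimensional
  exact ⟨fd_ext' ((M' ⊓ N).comap (M ⊓ N).subtype) ‹_› fdInf,
    tower_fd_quot' _ _ (sup_le_sup_right h N) h2⟩

end Aux

/-- Let `X` be a vector space with linear subspaces `M₁, M₂, N₁, N₂`. Assume `M₁ ∼f M₂` and
`N₁ ∼f N₂` (finite changes), and that `(M₂, N₂)` is a Fredholm pair. Then `(M₁, N₁)` is a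
Fredholm pair and `Index(M₁, N₁) = Index(M₂, N₂) + [M₁ − M₂] + [N₁ − N₂]`, where
`Index(M, N) = dim (M ∩ N) − dim (X/(M + N))` and
`[M − N] = dim (M/(M ∩ N)) − dim (N/(M ∩ N))` (integers). -/
theorem index_finite_perturb
    {𝕂 : Type*} [Field 𝕂] {X : Type*} [AddCommGroup X] [Module 𝕂 X]
    (M₁ M₂ N₁ N₂ : Submodule 𝕂 X)
    (hM₁ : FiniteDimensional 𝕂 (↥M₁ ⧸ (M₁ ⊓ M₂).comap M₁.subtype))
    (hM₂ : FiniteDimensional 𝕂 (↥M₂ ⧸ (M₁ ⊓ M₂).comap M₂.subtype))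
    (hN₁ : FiniteDimensional 𝕂 (↥N₁ ⧸ (N₁ ⊓ N₂).comap N₁.subtype))
    (hN₂ : FiniteDimensional 𝕂 (↥N₂ ⧸ (N₁ ⊓ N₂).comap N₂.subtype))
    (hF₁ : FiniteDimensional 𝕂 ↥(M₂ ⊓ N₂))
    (hF₂ : FiniteDimensional 𝕂 (X ⧸ (M₂ ⊔ N₂))) :
    FiniteDimensional 𝕂 ↥(M₁ ⊓ N₁)
      ∧ FiniteDimensional 𝕂 (X ⧸ (M₁ ⊔ N₁))
      ∧ (Module.finrank 𝕂 ↥(M₁ ⊓ N₁) : ℤ) - (Module.finrank 𝕂 (X ⧸ (M₁ ⊔ N₁)) : ℤ)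
          = ((Module.finrank 𝕂 ↥(M₂ ⊓ N₂) : ℤ) - (Module.finrank 𝕂 (X ⧸ (M₂ ⊔ N₂)) : ℤ))
            + ((Module.finrank 𝕂 (↥M₁ ⧸ (M₁ ⊓ M₂).comap M₁.subtype) : ℤ)
                - (Module.finrank 𝕂 (↥M₂ ⧸ (M₁ ⊓ M₂).comap M₂.subtype) : ℤ))
            + ((Module.finrank 𝕂 (↥N₁ ⧸ (N₁ ⊓ N₂).comap N₁.subtype) : ℤ)
                - (Module.finrank 𝕂 (↥N₂ ⧸ (N₁ ⊓ N₂).comap N₂.subtype) : ℤ)) := by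
  -- Step A : pass from (M₂, N₂) down to (M₁ ⊓ M₂, N₂)
  obtain ⟨fdA1, fdA2, eqA⟩ := step_down' (M₁ ⊓ M₂) M₂ N₂ inf_le_right hM₂ hF₁ hF₂
  have fdA1' : FiniteDimensional 𝕂 ↥(N₂ ⊓ (M₁ ⊓ M₂)) := by
    rwa [inf_comm N₂ (M₁ ⊓ M₂)]
  have fdA2' : FiniteDimensional 𝕂 (X ⧸ (N₂ ⊔ (M₁ ⊓ M₂))) := by
    rwa [sup_comm N₂ (M₁ ⊓ M₂)]
  -- Step B : pass from (N₂, M₁ ⊓ M₂) down to (N₁ ⊓ N₂, M₁ ⊓ M₂)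
  obtain ⟨fdB1, fdB2, eqB⟩ :=
    step_down' (N₁ ⊓ N₂) N₂ (M₁ ⊓ M₂) inf_le_right hN₂ fdA1' fdA2'
  -- Step C : pass from (N₁ ⊓ N₂, M₁ ⊓ M₂) up to (N₁, M₁ ⊓ M₂)
  obtain ⟨fdC1, fdC2⟩ := step_up' (N₁ ⊓ N₂) N₁ (M₁ ⊓ M₂) inf_le_left hN₁ fdB1 fdB2
  obtain ⟨-, -, eqC⟩ := step_down' (N₁ ⊓ N₂) N₁ (M₁ ⊓ M₂) inf_le_left hN₁ fdC1 fdC2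
  -- Step D : pass from (M₁ ⊓ M₂, N₁) up to (M₁, N₁)
  have fdC1' : FiniteDimensional 𝕂 ↥((M₁ ⊓ M₂) ⊓ N₁) := by
    rwa [inf_comm (M₁ ⊓ M₂) N₁]
  have fdC2' : FiniteDimensional 𝕂 (X ⧸ ((M₁ ⊓ M₂) ⊔ N₁)) := by
    rwa [sup_comm (M₁ ⊓ M₂) N₁]
  obtain ⟨goal1, goal2⟩ := step_up' (M₁ ⊓ M₂) M₁ N₁ inf_le_left hM₁ fdC1' fdC2'
  obtain ⟨-, -, eqD⟩ := step_down' (M₁ ⊓ M₂) M₁ N₁ inf_le_left hM₁ goal1 goal2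
  refine ⟨goal1, goal2, ?_⟩
  -- align the commuted intersections and sums
  rw [inf_comm N₂ (M₁ ⊓ M₂), sup_comm N₂ (M₁ ⊓ M₂),
      inf_comm (N₁ ⊓ N₂) (M₁ ⊓ M₂), sup_comm (N₁ ⊓ N₂) (M₁ ⊓ M₂)] at eqB
  rw [inf_comm N₁ (M₁ ⊓ M₂), sup_comm N₁ (M₁ ⊓ M₂),
      inf_comm (N₁ ⊓ N₂) (M₁ ⊓ M₂), sup_comm (N₁ ⊓ N₂) (M₁ ⊓ M₂)] at eqC
  linarith [eqA, eqB, eqC, eqD]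
end

section
/- Let (X, ω) be a symplectic vector space over 𝕂 ∈ {ℝ, ℂ}, let λ be a Lagrangian subspace of X, and let V be a finite-dimensional linear subspace of X with V ∩ λ = {0}. Then dim(λ/(V^ω ∩ λ)) = dim V and V^ω + λ = X. -/
/-- Let `(X, ω)` be a symplectic vector space over `𝕂 ∈ {ℝ, ℂ}`, `l` a Lagrangian subspace,
and `V` a finite-dimensional subspace with `V ∩ l = {0}`. Then
`dim (l/(V^ω ∩ l)) = dim V` and `V^ω + l = X`. -/
theorem V_omega_lagrangian
    {𝕂 : Type*} [RCLike 𝕂] {X : Type*} [AddCommGroup X] [Module 𝕂 X]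
    (ω : X →ₗ[𝕂] X →ₗ[𝕂] 𝕂)
    (hskew : ∀ x y, ω x y = - ω y x)
    (hnondeg : ∀ x, (∀ y, ω x y = 0) → x = 0)
    (l V : Submodule 𝕂 X)
    (hl : omegaAnn ω l = l)
    (hVfin : FiniteDimensional 𝕂 ↥V)
    (hVl : V ⊓ l = ⊥) :
    Module.rank 𝕂 (↥l ⧸ (omegaAnn ω V ⊓ l).comap l.subtype) = Module.rank 𝕂 ↥V
      ∧ omegaAnn ω V ⊔ l = ⊤ := by
  -- the map X → Dual V, x ↦ ω x |_V
  let φ : X →ₗ[𝕂] Module.Dual 𝕂 V :=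
    { toFun := fun x => (ω x).comp V.subtype
      map_add' := by intro a b; ext v; simp
      map_smul' := by intro c a; ext v; simp }
  let φl : l →ₗ[𝕂] Module.Dual 𝕂 V := φ.comp l.subtype
  -- surjectivity of φl
  have hsurj : Function.Surjective φl := by
    rw [← LinearMap.range_eq_top]
    by_contra hne
    obtain ⟨g, gne, hg⟩ :=
      (LinearMap.range φl).exists_dual_map_eq_bot_of_lt_top (lt_top_iff_ne_top.mpr hne)
        inferInstance
    set v : V := (Module.evalEquiv 𝕂 V).symm g with hv
    have hvg : ∀ f : Module.Dual 𝕂 V, g f = f v := by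
      intro f
      rw [hv, Module.apply_evalEquiv_symm_apply]
    have hvl : ∀ x ∈ l, ω (v : X) x = 0 := by
      intro x hx
      have : g (φl ⟨x, hx⟩) = 0 := by
        have : φl ⟨x, hx⟩ ∈ LinearMap.range φl := ⟨_, rfl⟩
        have := Submodule.mem_map_of_mem (f := g) this
        rw [hg] at this
        simpa using this
      rw [hvg] at this
      have : ω x (v : X) = 0 := this
      rw [hskew]
      simp [this]
    have : (v : X) ∈ omegaAnn ω l := hvl
    rw [hl] at this
    have hv0 : (v : X) ∈ V ⊓ l := ⟨v.2, this⟩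
    rw [hVl] at hv0
    apply gne
    have : v = 0 := by ext; simpa using hv0
    ext f
    rw [hvg, this]
    simp
  have hker : LinearMap.ker φl = (omegaAnn ω V ⊓ l).comap l.subtype := by
    ext ⟨x, hx⟩
    simp only [LinearMap.mem_ker, Submodule.mem_comap, Submodule.mem_inf]
    constructor
    · intro h
      refine ⟨fun y hy => ?_, hx⟩
      have := congrFun (congrArg DFunLike.coe h) ⟨y, hy⟩
      simpa [φl, φ] using this
    · rintro ⟨h, -⟩
      ext ⟨y, hy⟩
      simpa [φl, φ] using h y hy
  constructor
  · rw [← hker]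
    have e1 := (φl.quotKerEquivRange).trans
      (LinearEquiv.ofTop _ (LinearMap.range_eq_top.mpr hsurj))
    have hfin : Module.Finite 𝕂 (↥l ⧸ LinearMap.ker φl) := Module.Finite.equiv e1.symm
    have h2 : Module.finrank 𝕂 (↥l ⧸ LinearMap.ker φl)
        = Module.finrank 𝕂 (Module.Dual 𝕂 ↥V) := e1.finrank_eq
    have h1 : Module.finrank 𝕂 (Module.Dual 𝕂 ↥V) = Module.finrank 𝕂 ↥V :=
      Subspace.dual_finrank_eq
    rw [← Module.finrank_eq_rank, ← Module.finrank_eq_rank, h2, h1]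
  · rw [eq_top_iff]
    intro x _
    obtain ⟨b, hb⟩ := hsurj (φ x)
    have hxb : x - (b : X) ∈ omegaAnn ω V := by
      intro y hy
      have := congrFun (congrArg DFunLike.coe hb) ⟨y, hy⟩
      simp only [φl, φ, LinearMap.comp_apply] at this
      simp only [map_sub, LinearMap.sub_apply]
      have : ω (b : X) y = ω x y := this
      rw [this, sub_self]
    have hx : x = (x - (b : X)) + (b : X) := (sub_add_cancel x (b : X)).symm
    rw [hx]
    exact Submodule.add_mem_sup hxb b.2
end

section
/- Let (Z, ω) be a symplectic vector space over 𝕂 ∈ {ℝ, ℂ} with Lagrangian subspaces X, Y such that Z = X ⊕ Y, and let V be a linear subspace of Z with V = (V ∩ X) + (V ∩ Y). Then: V^ω = ((V ∩ Y)^ω ∩ X) + ((V ∩ X)^ω ∩ Y); V^ω ∩ X = (V ∩ Y)^ω ∩ X; V^ω ∩ Y = (V ∩ X)^ω ∩ Y; V^ω + X = X + ((V ∩ X)^ω ∩ Y) = (V ∩ X)^ω; and V^ω + Y = ((V ∩ Y)^ω ∩ X) + Y = (V ∩ Y)^ω. -/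

theorem omegaAnn_mono' {𝕂 : Type*} [Field 𝕂] {Z : Type*} [AddCommGroup Z] [Module 𝕂 Z]
    (ω : Z →ₗ[𝕂] Z →ₗ[𝕂] 𝕂) {A B : Submodule 𝕂 Z} (h : A ≤ B) :
    omegaAnn ω B ≤ omegaAnn ω A := fun _ hx y hy => hx y (h hy)

theorem omegaAnn_sup' {𝕂 : Type*} [Field 𝕂] {Z : Type*} [AddCommGroup Z] [Module 𝕂 Z]
    (ω : Z →ₗ[𝕂] Z →ₗ[𝕂] 𝕂) (A B : Submodule 𝕂 Z) :
    omegaAnn ω (A ⊔ B) = omegaAnn ω A ⊓ omegaAnn ω B := by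
  refine le_antisymm
    (le_inf (omegaAnn_mono' ω le_sup_left) (omegaAnn_mono' ω le_sup_right)) ?_
  rintro x ⟨hxA, hxB⟩ y hy
  obtain ⟨a, ha, b, hb, rfl⟩ := Submodule.mem_sup.mp hy
  simp [map_add, hxA a ha, hxB b hb]

/-- Let `(Z, ω)` be a symplectic vector space over `𝕂 ∈ {ℝ, ℂ}` with Lagrangian subspaces
`X`, `Y` such that `Z = X ⊕ Y`, and let `V` be a subspace with `V = (V ∩ X) + (V ∩ Y)`.
Then `V^ω = ((V ∩ Y)^ω ∩ X) + ((V ∩ X)^ω ∩ Y)`; `V^ω ∩ X = (V ∩ Y)^ω ∩ X`;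
`V^ω ∩ Y = (V ∩ X)^ω ∩ Y`; `V^ω + X = X + ((V ∩ X)^ω ∩ Y) = (V ∩ X)^ω`; and
`V^ω + Y = ((V ∩ Y)^ω ∩ X) + Y = (V ∩ Y)^ω`. -/
theorem diag_omega
    {𝕂 : Type*} [RCLike 𝕂] {Z : Type*} [AddCommGroup Z] [Module 𝕂 Z]
    (ω : Z →ₗ[𝕂] Z →ₗ[𝕂] 𝕂)
    (hskew : ∀ x y, ω x y = - ω y x)
    (hnondeg : ∀ x, (∀ y, ω x y = 0) → x = 0)
    (X Y : Submodule 𝕂 Z)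
    (hX : omegaAnn ω X = X) (hY : omegaAnn ω Y = Y)
    (hcompl : IsCompl X Y)
    (V : Submodule 𝕂 Z)
    (hVdiag : (V ⊓ X) ⊔ (V ⊓ Y) = V) :
    omegaAnn ω V = (omegaAnn ω (V ⊓ Y) ⊓ X) ⊔ (omegaAnn ω (V ⊓ X) ⊓ Y)
      ∧ omegaAnn ω V ⊓ X = omegaAnn ω (V ⊓ Y) ⊓ X
      ∧ omegaAnn ω V ⊓ Y = omegaAnn ω (V ⊓ X) ⊓ Y
      ∧ omegaAnn ω V ⊔ X = X ⊔ (omegaAnn ω (V ⊓ X) ⊓ Y)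
      ∧ X ⊔ (omegaAnn ω (V ⊓ X) ⊓ Y) = omegaAnn ω (V ⊓ X)
      ∧ omegaAnn ω V ⊔ Y = (omegaAnn ω (V ⊓ Y) ⊓ X) ⊔ Y
      ∧ (omegaAnn ω (V ⊓ Y) ⊓ X) ⊔ Y = omegaAnn ω (V ⊓ Y) := by
  have hVann : omegaAnn ω V = omegaAnn ω (V ⊓ X) ⊓ omegaAnn ω (V ⊓ Y) := by
    conv_lhs => rw [← hVdiag]
    exact omegaAnn_sup' ω _ _
  have hXle : X ≤ omegaAnn ω (V ⊓ X) := hX.ge.trans (omegaAnn_mono' ω inf_le_right)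
  have hYle : Y ≤ omegaAnn ω (V ⊓ Y) := hY.ge.trans (omegaAnn_mono' ω inf_le_right)
  -- decomposition of elements
  have hdec : ∀ w : Z, ∃ a ∈ X, ∃ b ∈ Y, a + b = w := by
    intro w
    have : w ∈ X ⊔ Y := by rw [hcompl.sup_eq_top]; trivial
    exact Submodule.mem_sup.mp this
  have h1 : omegaAnn ω V = (omegaAnn ω (V ⊓ Y) ⊓ X) ⊔ (omegaAnn ω (V ⊓ X) ⊓ Y) := by
    refine le_antisymm ?_ ?_
    · intro w hw
      obtain ⟨a, ha, b, hb, rfl⟩ := hdec w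
      refine Submodule.mem_sup.mpr ⟨a, ⟨?_, ha⟩, b, ⟨?_, hb⟩, rfl⟩
      · intro y hy
        have hb0 : ω b y = 0 := hY.ge hb y hy.2
        have hab := hw y hy.1
        simpa [map_add, hb0] using hab
      · intro y hy
        have ha0 : ω a y = 0 := hX.ge ha y hy.2
        have hab := hw y hy.1
        simpa [map_add, ha0] using hab
    · rw [hVann]
      exact sup_le (le_inf (inf_le_right.trans hXle) inf_le_left)
        (le_inf inf_le_left (inf_le_right.trans hYle))
  have h5 : X ⊔ (omegaAnn ω (V ⊓ X) ⊓ Y) = omegaAnn ω (V ⊓ X) := by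
    refine le_antisymm (sup_le hXle inf_le_left) ?_
    intro w hw
    obtain ⟨a, ha, b, hb, rfl⟩ := hdec w
    refine Submodule.mem_sup.mpr ⟨a, ha, b, ⟨?_, hb⟩, rfl⟩
    have : (a + b) - a ∈ omegaAnn ω (V ⊓ X) := sub_mem hw (hXle ha)
    simpa using this
  have h7 : (omegaAnn ω (V ⊓ Y) ⊓ X) ⊔ Y = omegaAnn ω (V ⊓ Y) := by
    refine le_antisymm (sup_le inf_le_left hYle) ?_
    intro w hw
    obtain ⟨a, ha, b, hb, rfl⟩ := hdec w
    refine Submodule.mem_sup.mpr ⟨a, ⟨?_, ha⟩, b, hb, rfl⟩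
    have : (a + b) - b ∈ omegaAnn ω (V ⊓ Y) := sub_mem hw (hYle hb)
    simpa using this
  refine ⟨h1, ?_, ?_, ?_, h5, ?_, h7⟩
  · rw [hVann]
    refine le_antisymm (le_inf (inf_le_left.trans inf_le_right) inf_le_right) ?_
    exact le_inf (le_inf (inf_le_right.trans hXle) inf_le_left) inf_le_right
  · rw [hVann]
    refine le_antisymm (le_inf (inf_le_left.trans inf_le_left) inf_le_right) ?_
    exact le_inf (le_inf inf_le_left (inf_le_right.trans hYle)) inf_le_right
  · rw [h1]
    exact le_antisymm
      (sup_le (sup_le (inf_le_right.trans le_sup_left) le_sup_right) le_sup_left)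
      (sup_le le_sup_right (le_sup_right.trans le_sup_left))
  · rw [h1]
    exact le_antisymm
      (sup_le (sup_le le_sup_left (inf_le_right.trans le_sup_right)) le_sup_right)
      (sup_le (le_sup_left.trans le_sup_left) le_sup_right)
end

section
/- Let (Z, ω) be a symplectic vector space over ℝ with Lagrangian subspaces X, Y such that Z = X ⊕ Y, and let λ be a Lagrangian subspace of Z. Set W := λ ∩ Y and assume λ + Y is ω-closed. For t ∈ ℝ define the linear operator P(t) : Z → Z by P(t)(x + y) = x + t·y for x ∈ X, y ∈ Y, and set α(t) := P(t)(λ) + W. Then for every t ∈ ℝ: α(0) = (W^ω ∩ X) + W, α(1) = λ, α(t) is a Lagrangian subspace of Z, dom(α(t)) = W^ω ∩ X, and α(t) ∩ Y = W. -/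
/-- Given a direct sum decomposition `Z = X ⊕ Y`, the linear operator
`P(t) : Z → Z` determined by `P(t)(x + y) = x + t • y` for `x ∈ X`, `y ∈ Y`. -/
noncomputable def diagScale {Z : Type*} [AddCommGroup Z] [Module ℝ Z]
    (X Y : Submodule ℝ Z) (h : IsCompl X Y) (t : ℝ) : Z →ₗ[ℝ] Z :=
  X.subtype ∘ₗ X.linearProjOfIsCompl Y h
    + t • (Y.subtype ∘ₗ Y.linearProjOfIsCompl X h.symm)

/-- Let `(Z, ω)` be a real symplectic vector space with Lagrangian subspaces `X`, `Y` such
that `Z = X ⊕ Y`, and `l` a Lagrangian subspace. Set `W = l ∩ Y` and assume `l + Y` is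
`ω`-closed. With `α(t) := P(t)(l) + W` one has, for every `t ∈ ℝ`:
`α(0) = (W^ω ∩ X) + W`, `α(1) = l`, `α(t)` is Lagrangian,
`dom (α(t)) = W^ω ∩ X` and `α(t) ∩ Y = W`. -/
theorem lagrangian_to_triangle
    {Z : Type*} [AddCommGroup Z] [Module ℝ Z]
    (ω : Z →ₗ[ℝ] Z →ₗ[ℝ] ℝ)
    (hskew : ∀ x y, ω x y = - ω y x)
    (hnondeg : ∀ x, (∀ y, ω x y = 0) → x = 0)
    (X Y : Submodule ℝ Z)
    (hX : omegaAnn ω X = X) (hY : omegaAnn ω Y = Y)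
    (hcompl : IsCompl X Y)
    (l : Submodule ℝ Z) (hl : omegaAnn ω l = l)
    (hclosed : omegaAnn ω (omegaAnn ω (l ⊔ Y)) = l ⊔ Y)
    (t : ℝ) :
    l.map (diagScale X Y hcompl 0) ⊔ (l ⊓ Y) = (omegaAnn ω (l ⊓ Y) ⊓ X) ⊔ (l ⊓ Y)
      ∧ l.map (diagScale X Y hcompl 1) ⊔ (l ⊓ Y) = l
      ∧ omegaAnn ω (l.map (diagScale X Y hcompl t) ⊔ (l ⊓ Y))
          = l.map (diagScale X Y hcompl t) ⊔ (l ⊓ Y)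
      ∧ {x : Z | x ∈ X ∧ ∃ y ∈ Y, x + y ∈ l.map (diagScale X Y hcompl t) ⊔ (l ⊓ Y)}
          = ↑(omegaAnn ω (l ⊓ Y) ⊓ X)
      ∧ (l.map (diagScale X Y hcompl t) ⊔ (l ⊓ Y)) ⊓ Y = l ⊓ Y := by
  classical
  set p : Z →ₗ[ℝ] Z := X.subtype ∘ₗ X.linearProjOfIsCompl Y hcompl with hp_def
  set q : Z →ₗ[ℝ] Z := Y.subtype ∘ₗ Y.linearProjOfIsCompl X hcompl.symm with hq_def
  have hdiag : ∀ (s : ℝ) (z : Z), diagScale X Y hcompl s z = p z + s • q z := fun s z => rfl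
  have hpq : ∀ z : Z, p z + q z = z := fun z =>
    Submodule.projection_add_projection_eq_self hcompl z
  have hpmem : ∀ z : Z, p z ∈ X := fun z => (X.linearProjOfIsCompl Y hcompl z).2
  have hqmem : ∀ z : Z, q z ∈ Y := fun z => (Y.linearProjOfIsCompl X hcompl.symm z).2
  have hpX : ∀ u ∈ X, p u = u := by
    intro u hu
    exact congrArg Subtype.val (Submodule.linearProjOfIsCompl_apply_left hcompl ⟨u, hu⟩)
  have hpY : ∀ u ∈ Y, p u = 0 := by
    intro u hu
    exact congrArg Subtype.val (Submodule.linearProjOfIsCompl_apply_right hcompl ⟨u, hu⟩)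
  have hqY : ∀ u ∈ Y, q u = u := by
    intro u hu
    exact congrArg Subtype.val (Submodule.linearProjOfIsCompl_apply_left hcompl.symm ⟨u, hu⟩)
  have hmem_ann : ∀ (V : Submodule ℝ Z) (x : Z), x ∈ omegaAnn ω V ↔ ∀ y ∈ V, ω x y = 0 :=
    fun V x => Iff.rfl
  have hXX : ∀ a ∈ X, ∀ b ∈ X, ω a b = 0 := fun a ha b hb => (hX.ge ha) b hb
  have hYY : ∀ a ∈ Y, ∀ b ∈ Y, ω a b = 0 := fun a ha b hb => (hY.ge ha) b hb
  have hll : ∀ a ∈ l, ∀ b ∈ l, ω a b = 0 := fun a ha b hb => (hl.ge ha) b hb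
  have hsup_ann : omegaAnn ω (l ⊔ Y) = l ⊓ Y := by
    ext x
    rw [hmem_ann, Submodule.mem_inf]
    constructor
    · intro h
      constructor
      · rw [← hl, hmem_ann]; exact fun y hy => h y (Submodule.mem_sup_left hy)
      · rw [← hY, hmem_ann]; exact fun y hy => h y (Submodule.mem_sup_right hy)
    · rintro ⟨h1, h2⟩ y hy
      rcases Submodule.mem_sup.mp hy with ⟨a, ha, b, hb, rfl⟩
      rw [map_add]
      rw [← hl] at h1
      rw [← hY] at h2
      rw [(hmem_ann l x).mp h1 a ha, (hmem_ann Y x).mp h2 b hb, add_zero]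
  have hW : omegaAnn ω (l ⊓ Y) = l ⊔ Y := by rw [← hsup_ann]; exact hclosed
  have hp_eq : ∀ z : Z, p z = z - q z := fun z => eq_sub_of_add_eq (hpq z)
  -- the projection of l to X equals (l ⊔ Y) ⊓ X
  have hproj : ∀ u : Z, u ∈ (l ⊔ Y) ⊓ X ↔ ∃ z ∈ l, p z = u := by
    intro u
    rw [Submodule.mem_inf]
    constructor
    · rintro ⟨hsup, huX⟩
      rcases Submodule.mem_sup.mp hsup with ⟨z, hz, y, hy, rfl⟩
      refine ⟨z, hz, ?_⟩
      have h1 : p (z + y) = z + y := hpX _ huX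
      rw [map_add, hpY y hy, add_zero] at h1
      exact h1
    · rintro ⟨z, hz, rfl⟩
      refine ⟨?_, hpmem z⟩
      rw [hp_eq]
      exact sub_mem (Submodule.mem_sup_left hz) (Submodule.mem_sup_right (hqmem z))
  -- α(s) ⊆ l ⊔ Y
  have hαle : ∀ s : ℝ, l.map (diagScale X Y hcompl s) ⊔ (l ⊓ Y) ≤ l ⊔ Y := by
    intro s
    refine sup_le ?_ (le_trans inf_le_left le_sup_left)
    rintro u hu
    rcases Submodule.mem_map.mp hu with ⟨z, hz, rfl⟩
    rw [hdiag, hp_eq]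
    exact add_mem (sub_mem (Submodule.mem_sup_left hz) (Submodule.mem_sup_right (hqmem z)))
      (Submodule.mem_sup_right (Submodule.smul_mem _ _ (hqmem z)))
  -- claim 5
  have main5 : ∀ s : ℝ, (l.map (diagScale X Y hcompl s) ⊔ (l ⊓ Y)) ⊓ Y = l ⊓ Y := by
    intro s
    refine le_antisymm ?_ (le_inf (le_trans le_sup_right le_rfl) inf_le_right)
    rintro u ⟨hmem, huY⟩
    rcases Submodule.mem_sup.mp hmem with ⟨v, hv, w, hw, rfl⟩
    rcases Submodule.mem_map.mp hv with ⟨z, hz, rfl⟩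
    have hwY : w ∈ Y := (Submodule.mem_inf.mp hw).2
    have hpz : p z = 0 := by
      have h0 : p (diagScale X Y hcompl s z + w) = 0 := hpY _ huY
      rw [map_add, hpY w hwY, add_zero, hdiag, map_add, map_smul,
        hpX _ (hpmem z), hpY _ (hqmem z), smul_zero, add_zero] at h0
      exact h0
    have hzY : z ∈ Y := by
      have := hpq z
      rw [hpz, zero_add] at this
      rw [← this]; exact hqmem z
    have hqz : q z = z := by
      have := hpq z
      rwa [hpz, zero_add] at this
    have : diagScale X Y hcompl s z + w = s • z + w := by
      rw [hdiag, hpz, hqz, zero_add]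
    rw [this]
    exact add_mem (Submodule.smul_mem _ _ (Submodule.mem_inf.mpr ⟨hz, hzY⟩)) hw
  -- claim 4 (with W^ω replaced by l ⊔ Y)
  have main4 : ∀ s : ℝ,
      {x : Z | x ∈ X ∧ ∃ y ∈ Y, x + y ∈ l.map (diagScale X Y hcompl s) ⊔ (l ⊓ Y)}
        = ↑((l ⊔ Y) ⊓ X : Submodule ℝ Z) := by
    intro s
    ext u
    simp only [Set.mem_setOf_eq, SetLike.mem_coe]
    constructor
    · rintro ⟨huX, y, hy, hmem⟩
      refine Submodule.mem_inf.mpr ⟨?_, huX⟩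
      have h1 : u + y ∈ l ⊔ Y := hαle s hmem
      have h2 : u = (u + y) - y := by abel
      rw [h2]
      exact sub_mem h1 (Submodule.mem_sup_right hy)
    · intro hu
      rcases (hproj u).mp hu with ⟨z, hz, rfl⟩
      refine ⟨hpmem z, s • q z, Submodule.smul_mem _ _ (hqmem z), ?_⟩
      rw [← hdiag]
      exact Submodule.mem_sup_left (Submodule.mem_map_of_mem hz)
  -- claim 1
  have main1 : l.map (diagScale X Y hcompl 0) = (l ⊔ Y) ⊓ X := by
    ext u
    rw [hproj, Submodule.mem_map]
    constructor
    · rintro ⟨z, hz, rfl⟩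
      refine ⟨z, hz, ?_⟩
      rw [hdiag, zero_smul, add_zero]
    · rintro ⟨z, hz, rfl⟩
      refine ⟨z, hz, ?_⟩
      rw [hdiag, zero_smul, add_zero]
  -- claim 2
  have main2 : l.map (diagScale X Y hcompl 1) ⊔ (l ⊓ Y) = l := by
    have hid : l.map (diagScale X Y hcompl 1) = l := by
      ext u
      rw [Submodule.mem_map]
      constructor
      · rintro ⟨z, hz, rfl⟩
        rw [hdiag, one_smul, hpq]
        exact hz
      · intro hu
        exact ⟨u, hu, by rw [hdiag, one_smul, hpq]⟩
    rw [hid]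
    exact sup_eq_left.mpr inf_le_left
  -- claim 3 : α(s) is Lagrangian
  have main3 : ∀ s : ℝ, omegaAnn ω (l.map (diagScale X Y hcompl s) ⊔ (l ⊓ Y))
      = l.map (diagScale X Y hcompl s) ⊔ (l ⊓ Y) := by
    intro s
    apply le_antisymm
    · -- coisotropic: α^ω ⊆ α
      intro u hu
      have hu' : ∀ v ∈ l.map (diagScale X Y hcompl s) ⊔ (l ⊓ Y), ω u v = 0 :=
        (hmem_ann _ u).mp hu
      have huLY : u ∈ l ⊔ Y := by
        rw [← hW]
        exact (hmem_ann _ u).mpr (fun w hw => hu' w (Submodule.mem_sup_right hw))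
      rcases Submodule.mem_sup.mp huLY with ⟨z, hz, y, hy, rfl⟩
      -- note p (z + y) = p z
      have hpzy : p (z + y) = p z := by rw [map_add, hpY y hy, add_zero]
      -- w := q (z+y) - s • q z lies in W
      have hwY : q (z + y) - s • q z ∈ Y :=
        sub_mem (hqmem _) (Submodule.smul_mem _ _ (hqmem z))
      have hwl : q (z + y) - s • q z ∈ l := by
        rw [← hl]
        refine (hmem_ann _ _).mpr ?_
        intro z' hz'
        have e1 : ω (p (z + y) + q (z + y)) (p z' + s • q z') = 0 := by
          rw [hpq (z + y), ← hdiag s z']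
          exact hu' _ (Submodule.mem_sup_left (Submodule.mem_map_of_mem hz'))
        have e2 : ω (p z + q z) (p z' + q z') = 0 := by
          rw [hpq z, hpq z']
          exact hll z hz z' hz'
        rw [hpzy] at e1
        have v1 : ω (p z) (p z') = 0 := hXX _ (hpmem z) _ (hpmem z')
        have v2 : ω y (q z') = 0 := hYY _ hy _ (hqmem z')
        have v4 : ω (q z) (q z') = 0 := hYY _ (hqmem z) _ (hqmem z')
        have hqy : q y = y := hqY y hy
        have goal' : ω (q (z + y) - s • q z) (p z' + q z') = 0 := by
          simp only [map_add, map_sub, map_smul, LinearMap.add_apply, LinearMap.sub_apply,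
            LinearMap.smul_apply, smul_eq_mul, hqy] at e1 e2 ⊢
          linear_combination e1 - s * e2 + (1 - s) * v4 + (1 - s) * v2 - (1 - s) * v1
        rwa [hpq z'] at goal'
      have hueq : z + y = diagScale X Y hcompl s z + (q (z + y) - s • q z) := by
        rw [hdiag]
        have h1 := hpq (z + y)
        have h2 : p z = p (z + y) := hpzy.symm
        rw [h2]
        calc z + y = p (z + y) + q (z + y) := (hpq (z + y)).symm
          _ = p (z + y) + s • q z + (q (z + y) - s • q z) := by abel
      rw [hueq]
      exact add_mem (Submodule.mem_sup_left (Submodule.mem_map_of_mem hz))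
        (Submodule.mem_sup_right (Submodule.mem_inf.mpr ⟨hwl, hwY⟩))
    · -- isotropic: α ⊆ α^ω
      intro v hv
      refine (hmem_ann _ v).mpr ?_
      intro v' hv'
      rcases Submodule.mem_sup.mp hv with ⟨a, ha, w, hw, rfl⟩
      rcases Submodule.mem_map.mp ha with ⟨z, hz, rfl⟩
      rcases Submodule.mem_sup.mp hv' with ⟨a', ha', w', hw', rfl⟩
      rcases Submodule.mem_map.mp ha' with ⟨z', hz', rfl⟩
      have hwl : w ∈ l := (Submodule.mem_inf.mp hw).1
      have hwY : w ∈ Y := (Submodule.mem_inf.mp hw).2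
      have hwl' : w' ∈ l := (Submodule.mem_inf.mp hw').1
      have hwY' : w' ∈ Y := (Submodule.mem_inf.mp hw').2
      -- base identities
      have e2 : ω (p z + q z) (p z' + q z') = 0 := by
        rw [hpq z, hpq z']; exact hll z hz z' hz'
      have e3 : ω (p z + q z) w' = 0 := by rw [hpq z]; exact hll z hz w' hwl'
      have e4 : ω w (p z' + q z') = 0 := by rw [hpq z']; exact hll w hwl z' hz'
      have v1 : ω (p z) (p z') = 0 := hXX _ (hpmem z) _ (hpmem z')
      have v2 : ω (q z) (q z') = 0 := hYY _ (hqmem z) _ (hqmem z')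
      have v3 : ω (q z) w' = 0 := hYY _ (hqmem z) _ hwY'
      have v4 : ω w (q z') = 0 := hYY _ hwY _ (hqmem z')
      have v5 : ω w w' = 0 := hll w hwl w' hwl'
      rw [hdiag s z, hdiag s z']
      simp only [map_add, map_smul, LinearMap.add_apply, LinearMap.smul_apply,
        smul_eq_mul] at e2 e3 e4 ⊢
      linear_combination s * e2 + e3 + e4 + (1 - s) * v1 + (s * s - s) * v2 +
        (s - 1) * v3 + (s - 1) * v4 + v5
  refine ⟨?_, main2, main3 t, ?_, main5 t⟩
  · rw [hW, main1]
  · rw [hW]; exact main4 t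
end
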